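/- A univariate real polynomial that is nonnegative on all of ℝ is a sum of two squares of polynomials. -/

import Mathlib

/-!
Induct on the degree. A nonconstant `p ≥ 0` has a complex root `z`. If `z = a` is real it is a
local minimum of `p`, hence a double root, and `(X - a)² ∣ p`; otherwise `p` is divisible by
`(X - z)(X - z̄) = (X - Re z)² + (Im z)²`. Either way `p = ((X - a)² + b²) h` with `h ≥ 0`
(by continuity at the finitely many roots of the quadratic), and the product of two sums of two
squares is again one: `(A² + B²)(Q² + S²) = (AQ - BS)² + (AS + BQ)²`.
-/

open Polynomial

namespace Polynomial

lemma eval_nonneg_of_eval_mul_nonneg {g h : ℝ[X]} (hg : g ≠ 0) (hg_nonneg : ∀ t, 0 ≤ g.eval t)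
    (hgh : ∀ t, 0 ≤ (g * h).eval t) (t : ℝ) : 0 ≤ h.eval t := by
  have hdense : Dense {x | g.IsRoot x}ᶜ := (finite_setOfPred_isRoot hg).countable.dense_compl ℝ
  have hsub : {x | g.IsRoot x}ᶜ ⊆ {x | 0 ≤ h.eval x} := fun x hx ↦ by
    have hghx := hgh x
    rw [eval_mul] at hghx
    exact nonneg_of_mul_nonneg_right hghx ((hg_nonneg x).lt_of_ne' hx)
  exact (isClosed_le continuous_const h.continuous).closure_subset_iff.2 hsub
    (hdense.closure_eq ▸ Set.mem_univ t)

lemma sq_X_sub_C_dvd_of_eval_nonneg {p : ℝ[X]} (hp : ∀ t, 0 ≤ p.eval t) {a : ℝ}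
    (ha : p.IsRoot a) : (X - C a) ^ 2 ∣ p := by
  rcases eq_or_ne p 0 with rfl | hp0
  · exact dvd_zero _
  have hmin : IsLocalMin (fun x ↦ p.eval x) a :=
    .of_forall fun x ↦ by simpa [ha.eq_zero] using hp x
  have hderiv : p.derivative.IsRoot a := by
    simpa [Polynomial.deriv] using hmin.deriv_eq_zero
  exact (le_rootMultiplicity_iff hp0).1 ((one_lt_rootMultiplicity_iff_isRoot hp0).2 ⟨ha, hderiv⟩)

lemma exists_sq_add_sq_dvd_of_eval_nonneg {p : ℝ[X]} (hp : ∀ t, 0 ≤ p.eval t)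
    (hdeg : 0 < p.degree) : ∃ a b : ℝ, (X - C a) ^ 2 + C b ^ 2 ∣ p := by
  obtain ⟨z, hz⟩ := IsAlgClosed.exists_aeval_eq_zero ℂ p hdeg.ne'
  by_cases him : z.im = 0
  · have hz_real : z = z.re := Complex.ext rfl (by simpa using him)
    have hroot : p.IsRoot z.re := by
      rw [hz_real, ← Complex.coe_algebraMap, aeval_algebraMap_apply] at hz
      simpa using hz
    exact ⟨z.re, 0, by simpa using sq_X_sub_C_dvd_of_eval_nonneg hp hroot⟩
  · refine ⟨z.re, z.im, ?_⟩
    convert p.quadratic_dvd_of_aeval_eq_zero_im_ne_zero hz him using 1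
    rw [Complex.sq_norm, Complex.normSq_apply]
    simp only [map_add, map_mul, C_ofNat]
    ring

lemma natDegree_sq_X_sub_C_add_C_sq (a b : ℝ) : ((X - C a) ^ 2 + C b ^ 2).natDegree = 2 := by
  rw [natDegree_add_eq_left_of_natDegree_lt] <;> simp

end Polynomial

/-- A univariate real polynomial that is nonnegative on `ℝ` is a sum of two squares. -/
theorem nonneg_poly_sum_two_squares (p : Polynomial ℝ) (hp : ∀ t : ℝ, 0 ≤ p.eval t) :
    ∃ q s : Polynomial ℝ, p = q ^ 2 + s ^ 2 := by
  induction hn : p.natDegree using Nat.strong_induction_on generalizing p with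
  | _ n ih =>
  rcases Nat.eq_zero_or_pos n with hn0 | hn0
  · rw [eq_C_of_natDegree_eq_zero (hn.trans hn0)] at hp ⊢
    exact ⟨C √(p.coeff 0), 0, by simp [← C_pow, Real.sq_sqrt (by simpa using hp 0)]⟩
  obtain ⟨a, b, h, rfl⟩ :=
    exists_sq_add_sq_dvd_of_eval_nonneg hp (natDegree_pos_iff_degree_pos.1 (hn ▸ hn0))
  have hg := natDegree_sq_X_sub_C_add_C_sq a b
  have hg0 : (X - C a) ^ 2 + C b ^ 2 ≠ 0 := ne_zero_of_natDegree_gt (hg ▸ two_pos)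
  have hh0 : h ≠ 0 := by rintro rfl; simp at hn; omega
  have hg_nonneg (t : ℝ) : 0 ≤ ((X - C a) ^ 2 + C b ^ 2).eval t := by
    simp only [eval_add, eval_pow, eval_sub, eval_X, eval_C]; positivity
  obtain ⟨q, s, rfl⟩ := ih h.natDegree (by rw [← hn, natDegree_mul hg0 hh0, hg]; omega) h
    (eval_nonneg_of_eval_mul_nonneg hg0 hg_nonneg hp) rfl
  exact ⟨(X - C a) * q - C b * s, (X - C a) * s + C b * q, by ring⟩
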